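/- arXiv:1505.00419 — 4 statements merged into one kernel-verified Lean document; each statement's English description precedes it below -/
import Mathlib

section
/- Let G be the group ⟨a,b | a^{b^2} = a·a^b, [a,a^b] = 1⟩, realized as (ℤ × ℤ) ⋊ ℤ where the generator t of ℤ acts on (u,v) ∈ ℤ × ℤ by (u,v)·t = (v, u+v). Then for every nonzero integer n and every nonzero element (u,v) of ℤ × ℤ, the action of t^n does not fix (u,v). Equivalently, the centralizer in ℤ × ℤ of any element outside the normal subgroup ℤ × ℤ is trivial. -/
/-! With `φ` the golden ratio, the linear form `L (u, v) = u + v φ` satisfies `L (t • p) = φ L p`,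
hence `L (tⁿ • p) = φ ^ n L p`. By irrationality of `φ`, `L` vanishes only at `0`, and
`φ ^ n ≠ 1` for `n ≠ 0`; so `tⁿ` fixes no nonzero `p`. -/

/-- The automorphism of ℤ × ℤ given by conjugation by `t` in the group
`⟨a,b | a^{b²} = a·a^b, [a,a^b] = 1⟩ ≅ (ℤ × ℤ) ⋊ ℤ`: `(u,v) ↦ (v, u+v)`. -/
def fibAut : AddAut (ℤ × ℤ) where
  toFun p := (p.2, p.1 + p.2)
  invFun p := (p.2 - p.1, p.1)
  left_inv p := by simp
  right_inv p := by simp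
  map_add' p q := by
    ext <;> simp <;> abel

open Real goldenRatio

theorem AddAut.map_zsmul_apply_of_map_apply {M G₀ : Type*} [Add M] [GroupWithZero G₀]
    (f : AddAut M) (L : M → G₀) {c : G₀} (hc : c ≠ 0) (hL : ∀ x, L (f x) = c * L x)
    (n : ℤ) (x : M) : L ((n • f) x) = c ^ n * L x := by
  have hL_neg (x : M) : L ((-f) x) = c⁻¹ * L x := by
    rw [eq_inv_mul_iff_mul_eq₀ hc, ← hL, ← AddAut.add_apply, add_neg_cancel, AddAut.zero_apply]
  induction n using Int.induction_on generalizing x with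
  | zero => simp
  | succ k ih => rw [add_one_zsmul, AddAut.add_apply, ih, hL, zpow_add_one₀ hc, mul_assoc]
  | pred k ih => rw [zpow_sub_one₀ hc, sub_one_zsmul, AddAut.add_apply, ih,
      hL_neg, mul_assoc]

noncomputable def goldenForm (p : ℤ × ℤ) : ℝ := p.1 + p.2 * φ

theorem goldenForm_fibAut (p : ℤ × ℤ) : goldenForm (fibAut p) = φ * goldenForm p := by
  simp only [goldenForm, fibAut, AddEquiv.coe_mk, Equiv.coe_fn_mk, Int.cast_add]
  linear_combination -(p.2 : ℝ) * goldenRatio_sq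

theorem goldenForm_eq_zero_iff {p : ℤ × ℤ} : goldenForm p = 0 ↔ p = 0 := by
  refine ⟨fun h => ?_, fun h => by simp [h, goldenForm]⟩
  have h2 : p.2 = 0 := by
    by_contra h2
    exact ((goldenRatio_irrational.intCast_mul h2).intCast_add p.1).ne_zero h
  simpa [goldenForm, Prod.ext_iff, h2] using h

/-- For every nonzero integer `n`, the action of `tⁿ` on ℤ × ℤ fixes no nonzero element:
the centralizer in G' = ℤ × ℤ of any element of G \ G' is trivial. -/
theorem stmt_7 (n : ℤ) (hn : n ≠ 0) (p : ℤ × ℤ) (hp : p ≠ 0) :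
    (n • fibAut) p ≠ p := by
  intro hfix
  have hform : φ ^ n * goldenForm p = goldenForm p := by
    rw [← fibAut.map_zsmul_apply_of_map_apply goldenForm goldenRatio_ne_zero goldenForm_fibAut,
      hfix]
  have hpow : φ ^ n = 1 :=
    (mul_eq_right₀ (goldenForm_eq_zero_iff.not.mpr hp)).mp hform
  exact hn ((zpow_eq_one_iff_right₀ goldenRatio_pos.le one_lt_goldenRatio.ne').mp hpow)
end

section
/- Let G be a group with elements x and c such that c has infinite order and x⁻¹cx = c². For any integer k ≥ 2, the set S = {x, xc, xc², ..., xc^{k−1}} satisfies |S·S| = 3k − 2. -/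
open Finset Pointwise

theorem stmt_12 {G : Type*} [Group G] [DecidableEq G] (x c : G)
    (hc : ¬ IsOfFinOrder c) (hconj : x⁻¹ * c * x = c ^ 2)
    (k : ℕ) (hk : 2 ≤ k) :
    let S : Finset G := (Finset.range k).image (fun i => x * c ^ i)
    (S * S).card = 3 * k - 2 := by
  intro S
  have hcx : ∀ i : ℕ, c ^ i * x = x * c ^ (2 * i) := by
    intro i
    have h1 : (x⁻¹ * c * x) ^ i = x⁻¹ * c ^ i * x := by
      rw [show x⁻¹ * c * x = x⁻¹ * c * x⁻¹⁻¹ by group, conj_pow]; group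
    have h2 : c ^ (2 * i) = x⁻¹ * c ^ i * x := by
      rw [← h1, hconj, ← pow_mul, Nat.mul_comm]
    rw [h2]; group
  have hmul : ∀ i j : ℕ, (x * c ^ i) * (x * c ^ j) = x ^ 2 * c ^ (2 * i + j) := by
    intro i j
    rw [pow_add, mul_assoc x (c ^ i), ← mul_assoc (c ^ i) x, hcx i, pow_two]
    group
  have key : S * S = (Finset.range (3 * k - 2)).image (fun m => x ^ 2 * c ^ m) := by
    ext g
    simp only [S, Finset.mem_mul, Finset.mem_image, Finset.mem_range]
    constructor
    · rintro ⟨a, ⟨i, hi, rfl⟩, b, ⟨j, hj, rfl⟩, rfl⟩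
      exact ⟨2 * i + j, by omega, (hmul i j).symm⟩
    · rintro ⟨m, hm, rfl⟩
      refine ⟨x * c ^ (min (m / 2) (k - 1)), ⟨_, by omega, rfl⟩,
        x * c ^ (m - 2 * min (m / 2) (k - 1)), ⟨_, by omega, rfl⟩, ?_⟩
      rw [hmul]
      congr 2
      omega
  have hinj : Function.Injective (fun m : ℕ => x ^ 2 * c ^ m) := by
    intro a b hab
    exact injective_pow_iff_not_isOfFinOrder.2 hc (mul_left_cancel hab)
  rw [key, Finset.card_image_of_injective _ hinj, Finset.card_range]
end

section
/- Let G be a group containing elements a, b, c with c ≠ 1, [a,c] = [b,c] = 1 and ab = bac, and suppose c has infinite order. For nonnegative integers i, j, let S = {a, ac, ..., ac^i, b, bc, ..., bc^j}. Then |S·S| = 3|S| − 2, where |S| = i + j + 2. -/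
open Finset Pointwise

theorem stmt_14 {G : Type*} [Group G] [DecidableEq G] (a b c : G)
    (hc1 : c ≠ 1) (hc : ¬ IsOfFinOrder c)
    (hac : Commute a c) (hbc : Commute b c)
    (hab : a * b = b * a * c) (i j : ℕ) :
    let S : Finset G :=
      (Finset.range (i + 1)).image (fun m => a * c ^ m) ∪
        (Finset.range (j + 1)).image (fun m => b * c ^ m)
    S.card = i + j + 2 ∧ (S * S).card = 3 * (i + j + 2) - 2 := by
  intro S
  -- basic facts about c
  have hfin : ∀ k : ℕ, 0 < k → c ^ k ≠ 1 := fun k hk h =>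
    hc (isOfFinOrder_iff_pow_eq_one.2 ⟨k, hk, h⟩)
  have hpow : ∀ m n : ℕ, c ^ m = c ^ n → m = n := by
    intro m n h
    by_contra hne
    rcases Nat.lt_or_ge m n with hlt | hge
    · have : c ^ (n - m) * c ^ m = 1 * c ^ m := by
        rw [← pow_add, one_mul, Nat.sub_add_cancel hlt.le, h]
      exact hfin (n - m) (by omega) (mul_right_cancel this)
    · have hlt : n < m := by omega
      have : c ^ (m - n) * c ^ n = 1 * c ^ n := by
        rw [← pow_add, one_mul, Nat.sub_add_cancel hlt.le, ← h]
      exact hfin (m - n) (by omega) (mul_right_cancel this)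
  have hca : ∀ m : ℕ, c ^ m * a = a * c ^ m := fun m => ((hac.pow_right m).eq).symm
  have hcb : ∀ m : ℕ, c ^ m * b = b * c ^ m := fun m => ((hbc.pow_right m).eq).symm
  -- from a coset-type equality deduce the translate relation
  have hcoset : ∀ (g h : G) (m n : ℕ), g * c ^ m = h * c ^ n →
      (∃ k : ℕ, g = h * c ^ k) ∨ (∃ k : ℕ, h = g * c ^ k) := by
    intro g h m n heq
    rcases le_or_gt m n with hle | hlt
    · left; refine ⟨n - m, ?_⟩
      have : g * c ^ m = h * c ^ (n - m) * c ^ m := by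
        rw [mul_assoc, ← pow_add, Nat.sub_add_cancel hle, heq]
      exact mul_right_cancel this
    · right; refine ⟨m - n, ?_⟩
      have : h * c ^ n = g * c ^ (m - n) * c ^ n := by
        rw [mul_assoc, ← pow_add, Nat.sub_add_cancel hlt.le, ← heq]
      exact mul_right_cancel this
  -- a and b do not commute
  have hnab : ¬ Commute a b := by
    intro h
    have h1 : b * a = b * a * c := h.eq.symm.trans hab
    exact hc1 (left_eq_mul.mp h1)
  -- neither lies in the other's c-coset
  have htrans : ∀ k : ℕ, a ≠ b * c ^ k := by
    intro k h
    apply hnab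
    calc a * b = b * c ^ k * b := by rw [← h]
      _ = b * (c ^ k * b) := by rw [mul_assoc]
      _ = b * (b * c ^ k) := by rw [hcb]
      _ = b * a := by rw [← h]
  have htrans' : ∀ k : ℕ, b ≠ a * c ^ k := by
    intro k h
    apply hnab
    calc a * b = a * (a * c ^ k) := by rw [← h]
      _ = a * (c ^ k * a) := by rw [hca]
      _ = (a * c ^ k) * a := by group
      _ = b * a := by rw [← h]
  -- product normal forms
  have hAA : ∀ m n : ℕ, (a * c ^ m) * (a * c ^ n) = a * a * c ^ (m + n) := by
    intro m n
    rw [mul_assoc, ← mul_assoc (c ^ m), hca, mul_assoc a, ← pow_add, ← mul_assoc]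
  have hBB : ∀ m n : ℕ, (b * c ^ m) * (b * c ^ n) = b * b * c ^ (m + n) := by
    intro m n
    rw [mul_assoc, ← mul_assoc (c ^ m), hcb, mul_assoc b, ← pow_add, ← mul_assoc]
  have hBA : ∀ m n : ℕ, (b * c ^ m) * (a * c ^ n) = b * a * c ^ (m + n) := by
    intro m n
    rw [mul_assoc, ← mul_assoc (c ^ m), hca, mul_assoc a, ← pow_add, ← mul_assoc]
  have hAB : ∀ m n : ℕ, (a * c ^ m) * (b * c ^ n) = b * a * c ^ (m + n + 1) := by
    intro m n
    rw [mul_assoc, ← mul_assoc (c ^ m), hcb, mul_assoc b, ← pow_add, ← mul_assoc, hab]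
    rw [mul_assoc (b * a), ← pow_succ']
  -- distinctness of the three left cosets in the product set
  have hAAne : ∀ m n : ℕ, a * a * c ^ m ≠ b * a * c ^ n := by
    intro m n h
    rcases hcoset _ _ _ _ h with ⟨k, hk⟩ | ⟨k, hk⟩
    · have : a = b * c ^ k := by
        have h2 : a * a = (b * c ^ k) * a := by
          rw [hk, mul_assoc, mul_assoc, hca, ← mul_assoc]
        exact mul_right_cancel h2
      exact htrans k this
    · have : b = a * c ^ k := by
        have h2 : b * a = (a * c ^ k) * a := by
          rw [hk, mul_assoc, mul_assoc, hca, ← mul_assoc]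
        exact mul_right_cancel h2
      exact htrans' k this
  have hBAne : ∀ m n : ℕ, b * a * c ^ m ≠ b * b * c ^ n := by
    intro m n h
    rcases hcoset _ _ _ _ h with ⟨k, hk⟩ | ⟨k, hk⟩
    · have : a = b * c ^ k := by
        have h2 : b * a = b * (b * c ^ k) := by rw [hk, mul_assoc]
        exact mul_left_cancel h2
      exact htrans k this
    · have : b = a * c ^ k := by
        have h2 : b * b = b * (a * c ^ k) := by rw [hk, mul_assoc]
        exact mul_left_cancel h2
      exact htrans' k this
  -- a² and b² cosets differ, using infinite order of c
  have sqne : ∀ k : ℕ, a * a ≠ b * b * c ^ k := by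
    intro k h
    have hcomm : a * a * b = b * (a * a) := by
      calc a * a * b = b * b * c ^ k * b := by rw [h]
        _ = b * b * (c ^ k * b) := by rw [mul_assoc]
        _ = b * b * (b * c ^ k) := by rw [hcb]
        _ = b * (b * b * c ^ k) := by group
        _ = b * (a * a) := by rw [← h]
    have hconj : a * a * b = b * (a * a) * (c * c) := by
      calc a * a * b = a * (a * b) := by rw [mul_assoc]
        _ = a * (b * a * c) := by rw [hab]
        _ = (a * b) * a * c := by rw [← mul_assoc, ← mul_assoc]
        _ = (b * a * c) * a * c := by rw [hab]
        _ = b * a * (c * a) * c := by rw [mul_assoc (b * a)]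
        _ = b * a * (a * c) * c := by rw [← hac.eq]
        _ = b * (a * a) * (c * c) := by group
    have hcc : c * c = 1 := by
      have h0 := hcomm.symm.trans hconj
      exact left_eq_mul.mp h0
    exact hfin 2 (by omega) (by rw [pow_two]; exact hcc)
  have sqne' : ∀ k : ℕ, b * b ≠ a * a * c ^ k := by
    intro k h
    have hcomm : b * b * a = a * (b * b) := by
      calc b * b * a = a * a * c ^ k * a := by rw [h]
        _ = a * a * (c ^ k * a) := by rw [mul_assoc]
        _ = a * a * (a * c ^ k) := by rw [hca]
        _ = a * (a * a * c ^ k) := by group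
        _ = a * (b * b) := by rw [← h]
    have hconj : a * (b * b) = b * b * a * (c * c) := by
      calc a * (b * b) = (a * b) * b := by rw [mul_assoc]
        _ = (b * a * c) * b := by rw [hab]
        _ = b * a * (c * b) := by rw [mul_assoc]
        _ = b * a * (b * c) := by rw [← hbc.eq]
        _ = b * (a * b) * c := by group
        _ = b * (b * a * c) * c := by rw [hab]
        _ = b * b * a * (c * c) := by group
    have hcc : c * c = 1 := by
      have h0 := hcomm.trans hconj
      exact left_eq_mul.mp h0
    exact hfin 2 (by omega) (by rw [pow_two]; exact hcc)
  have hABBne : ∀ m n : ℕ, a * a * c ^ m ≠ b * b * c ^ n := by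
    intro m n h
    rcases hcoset _ _ _ _ h with ⟨k, hk⟩ | ⟨k, hk⟩
    · exact sqne k hk
    · exact sqne' k hk
  -- membership helpers for S
  have hmemSa : ∀ m : ℕ, m ≤ i → a * c ^ m ∈ S := by
    intro m hm
    exact Finset.mem_union_left _ (Finset.mem_image.2 ⟨m, Finset.mem_range.2 (by omega), rfl⟩)
  have hmemSb : ∀ m : ℕ, m ≤ j → b * c ^ m ∈ S := by
    intro m hm
    exact Finset.mem_union_right _ (Finset.mem_image.2 ⟨m, Finset.mem_range.2 (by omega), rfl⟩)
  -- the target description of S * S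
  set T1 : Finset G := (Finset.range (2 * i + 1)).image (fun m => a * a * c ^ m) with hT1
  set T2 : Finset G := (Finset.range (i + j + 2)).image (fun m => b * a * c ^ m) with hT2
  set T3 : Finset G := (Finset.range (2 * j + 1)).image (fun m => b * b * c ^ m) with hT3
  have hST : S * S = T1 ∪ T2 ∪ T3 := by
    apply Finset.Subset.antisymm
    · rw [Finset.mul_subset_iff]
      intro x hx y hy
      simp only [S, Finset.mem_union, Finset.mem_image, Finset.mem_range, Nat.lt_succ_iff] at hx hy
      rcases hx with ⟨m, hm, rfl⟩ | ⟨m, hm, rfl⟩ <;> rcases hy with ⟨n, hn, rfl⟩ | ⟨n, hn, rfl⟩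
      · exact Finset.mem_union_left _ (Finset.mem_union_left _
          (Finset.mem_image.2 ⟨m + n, Finset.mem_range.2 (by omega), (hAA m n).symm⟩))
      · exact Finset.mem_union_left _ (Finset.mem_union_right _
          (Finset.mem_image.2 ⟨m + n + 1, Finset.mem_range.2 (by omega), (hAB m n).symm⟩))
      · exact Finset.mem_union_left _ (Finset.mem_union_right _
          (Finset.mem_image.2 ⟨m + n, Finset.mem_range.2 (by omega), (hBA m n).symm⟩))
      · exact Finset.mem_union_right _
          (Finset.mem_image.2 ⟨m + n, Finset.mem_range.2 (by omega), (hBB m n).symm⟩)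
    · intro x hx
      simp only [hT1, hT2, hT3, Finset.mem_union, Finset.mem_image, Finset.mem_range,
        Nat.lt_succ_iff] at hx
      rcases hx with (⟨m, hm, rfl⟩ | ⟨m, hm, rfl⟩) | ⟨m, hm, rfl⟩
      · rcases le_or_gt m i with h' | h'
        · have heq : a * a * c ^ m = (a * c ^ 0) * (a * c ^ m) := by
            rw [hAA, Nat.zero_add]
          rw [heq]
          exact Finset.mul_mem_mul (hmemSa _ (Nat.zero_le i)) (hmemSa _ h')
        · have heq : a * a * c ^ m = (a * c ^ i) * (a * c ^ (m - i)) := by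
            have e : i + (m - i) = m := by omega
            rw [hAA, e]
          rw [heq]
          exact Finset.mul_mem_mul (hmemSa _ le_rfl) (hmemSa _ (by omega))
      · rcases le_or_gt m (i + j) with hle | hlt
        · rcases le_or_gt m j with h' | h'
          · have heq : b * a * c ^ m = (b * c ^ m) * (a * c ^ 0) := by
              rw [hBA, Nat.add_zero]
            rw [heq]
            exact Finset.mul_mem_mul (hmemSb _ h') (hmemSa _ (Nat.zero_le i))
          · have heq : b * a * c ^ m = (b * c ^ j) * (a * c ^ (m - j)) := by
              have e : j + (m - j) = m := by omega
              rw [hBA, e]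
            rw [heq]
            exact Finset.mul_mem_mul (hmemSb _ le_rfl) (hmemSa _ (by omega))
        · have hm' : m = i + j + 1 := by omega
          have heq : b * a * c ^ m = (a * c ^ i) * (b * c ^ j) := by
            rw [hAB, hm']
          rw [heq]
          exact Finset.mul_mem_mul (hmemSa _ le_rfl) (hmemSb _ le_rfl)
      · rcases le_or_gt m j with h' | h'
        · have heq : b * b * c ^ m = (b * c ^ 0) * (b * c ^ m) := by
            rw [hBB, Nat.zero_add]
          rw [heq]
          exact Finset.mul_mem_mul (hmemSb _ (Nat.zero_le j)) (hmemSb _ h')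
        · have heq : b * b * c ^ m = (b * c ^ j) * (b * c ^ (m - j)) := by
            have e : j + (m - j) = m := by omega
            rw [hBB, e]
          rw [heq]
          exact Finset.mul_mem_mul (hmemSb _ le_rfl) (hmemSb _ (by omega))
  -- cardinality computations
  have hinj : ∀ g : G, Set.InjOn (fun m : ℕ => g * c ^ m) (Finset.range (i + 1) : Finset ℕ) := by
    intro g x _ y _ h
    exact hpow x y (mul_left_cancel h)
  have cardim : ∀ (g : G) (p : ℕ), ((Finset.range p).image (fun m => g * c ^ m)).card = p := by
    intro g p
    rw [Finset.card_image_of_injOn (fun x _ y _ h => hpow x y (mul_left_cancel h)),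
      Finset.card_range]
  have hABdisj : ∀ m n : ℕ, a * c ^ m ≠ b * c ^ n := by
    intro m n h
    rcases hcoset _ _ _ _ h with ⟨k, hk⟩ | ⟨k, hk⟩
    · exact htrans k hk
    · exact htrans' k hk
  have cardS : S.card = i + j + 2 := by
    have hdisj : Disjoint ((Finset.range (i + 1)).image (fun m => a * c ^ m))
        ((Finset.range (j + 1)).image (fun m => b * c ^ m)) := by
      rw [Finset.disjoint_left]
      rintro x hx hy
      obtain ⟨m, _, rfl⟩ := Finset.mem_image.1 hx
      obtain ⟨n, _, hn⟩ := Finset.mem_image.1 hy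
      exact hABdisj m n hn.symm
    rw [show S = _ ∪ _ from rfl, Finset.card_union_of_disjoint hdisj, cardim, cardim]
    omega
  have cardT : (T1 ∪ T2 ∪ T3).card = 3 * (i + j + 2) - 2 := by
    have d12 : Disjoint T1 T2 := by
      rw [Finset.disjoint_left]
      rintro x hx hy
      obtain ⟨m, _, rfl⟩ := Finset.mem_image.1 hx
      obtain ⟨n, _, hn⟩ := Finset.mem_image.1 hy
      exact hAAne m n hn.symm
    have d13 : Disjoint T1 T3 := by
      rw [Finset.disjoint_left]
      rintro x hx hy
      obtain ⟨m, _, rfl⟩ := Finset.mem_image.1 hx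
      obtain ⟨n, _, hn⟩ := Finset.mem_image.1 hy
      exact hABBne m n hn.symm
    have d23 : Disjoint T2 T3 := by
      rw [Finset.disjoint_left]
      rintro x hx hy
      obtain ⟨m, _, rfl⟩ := Finset.mem_image.1 hx
      obtain ⟨n, _, hn⟩ := Finset.mem_image.1 hy
      exact hBAne m n hn.symm
    rw [Finset.card_union_of_disjoint (Finset.disjoint_union_left.2 ⟨d13, d23⟩),
      Finset.card_union_of_disjoint d12, hT1, hT2, hT3, cardim, cardim, cardim]
    omega
  exact ⟨cardS, by rw [hST]; exact cardT⟩
end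

section
/- Let G be a group with elements c, y such that c has infinite order and y⁻¹cy = c². Then the set S = {1, c, c², y} satisfies |S·S| = 10 = 3|S| − 2. -/
open Finset Pointwise

theorem stmt_15 {G : Type*} [Group G] [DecidableEq G] (c y : G)
    (hc : ¬ IsOfFinOrder c) (hconj : y⁻¹ * c * y = c ^ 2) :
    let S : Finset G := {1, c, c ^ 2, y}
    (S * S).card = 10 ∧ (S * S).card = 3 * S.card - 2 := by
  intro S
  have hPinj : Function.Injective (fun n : ℕ => c ^ n) :=
    injective_pow_iff_not_isOfFinOrder.mpr hc
  have hP : ∀ i j : ℕ, i ≠ j → c ^ i ≠ c ^ j := fun i j hij h => hij (hPinj h)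
  have hzinj : Function.Injective (fun n : ℤ => c ^ n) :=
    injective_zpow_iff_not_isOfFinOrder.mpr hc
  -- y is not a power of c
  have hy : ∀ k : ℤ, y ≠ c ^ k := by
    intro k hk
    have h1 : c = c ^ 2 := by rw [← hconj, hk]; group
    exact hP 1 2 (by norm_num) (by rw [pow_one]; exact h1)
  have hy' : ∀ m : ℕ, y ≠ c ^ m := fun m h => hy (m : ℤ) (by rw [zpow_natCast]; exact h)
  have hA : ∀ n m : ℕ, y * c ^ n ≠ c ^ m := by
    intro n m h
    exact hy ((m : ℤ) - n)
      (by rw [zpow_sub, zpow_natCast, zpow_natCast]; exact eq_mul_inv_of_mul_eq h)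
  have hB : ∀ n m : ℕ, n ≠ m → y * c ^ n ≠ y * c ^ m :=
    fun n m hnm h => hP n m hnm (mul_left_cancel h)
  -- y^2 conjugates c to c^4, hence y^2 is not a power of c
  have hkey : (y * y)⁻¹ * c * (y * y) = c ^ 4 := by
    calc (y * y)⁻¹ * c * (y * y) = y⁻¹ * (y⁻¹ * c * y) * y := by group
      _ = y⁻¹ * c ^ 2 * y := by rw [hconj]
      _ = (y⁻¹ * c * y) ^ 2 := by rw [pow_two, pow_two]; group
      _ = (c ^ 2) ^ 2 := by rw [hconj]
      _ = c ^ 4 := by rw [← pow_mul]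
  have hyy : ∀ m : ℕ, y * y ≠ c ^ m := by
    intro m h
    have h1 : c = c ^ 4 := by
      rw [← hkey, h]; group
    exact hP 1 4 (by norm_num) (by rw [pow_one]; exact h1)
  -- commutation relations
  have hcy : c * y = y * c ^ 2 := by rw [← hconj]; group
  have hc2y : c ^ 2 * y = y * c ^ 4 := by
    calc c ^ 2 * y = c * (c * y) := by rw [pow_two, mul_assoc]
      _ = c * (y * c ^ 2) := by rw [hcy]
      _ = (c * y) * c ^ 2 := by rw [mul_assoc]
      _ = (y * c ^ 2) * c ^ 2 := by rw [hcy]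
      _ = y * c ^ 4 := by rw [mul_assoc, ← pow_add]
  -- the product set
  have hS : S * S = ({1, c, c ^ 2, c ^ 3, c ^ 4, y, y * c, y * c ^ 2, y * c ^ 4, y * y} :
      Finset G) := by
    ext x
    simp only [S, Finset.mem_mul, Finset.mem_insert, Finset.mem_singleton]
    constructor
    · rintro ⟨a, (rfl | rfl | rfl | rfl), b, (rfl | rfl | rfl | rfl), rfl⟩
      · exact Or.inl (one_mul 1)
      · exact Or.inr (Or.inl (one_mul _))
      · exact Or.inr (Or.inr (Or.inl (one_mul _)))
      · exact Or.inr (Or.inr (Or.inr (Or.inr (Or.inr (Or.inl (one_mul _))))))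
      · exact Or.inr (Or.inl (mul_one _))
      · exact Or.inr (Or.inr (Or.inl (pow_two _).symm))
      · exact Or.inr (Or.inr (Or.inr (Or.inl (pow_succ' _ 2).symm)))
      · exact Or.inr (Or.inr (Or.inr (Or.inr (Or.inr (Or.inr (Or.inr (Or.inl hcy)))))))
      · exact Or.inr (Or.inr (Or.inl (mul_one _)))
      · exact Or.inr (Or.inr (Or.inr (Or.inl (pow_succ _ 2).symm)))
      · exact Or.inr (Or.inr (Or.inr (Or.inr (Or.inl (pow_add _ 2 2).symm))))
      · exact Or.inr (Or.inr (Or.inr (Or.inr (Or.inr (Or.inr (Or.inr (Or.inr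
          (Or.inl hc2y))))))))
      · exact Or.inr (Or.inr (Or.inr (Or.inr (Or.inr (Or.inl (mul_one _))))))
      · exact Or.inr (Or.inr (Or.inr (Or.inr (Or.inr (Or.inr (Or.inl rfl))))))
      · exact Or.inr (Or.inr (Or.inr (Or.inr (Or.inr (Or.inr (Or.inr (Or.inl rfl)))))))
      · exact Or.inr (Or.inr (Or.inr (Or.inr (Or.inr (Or.inr (Or.inr (Or.inr (Or.inr
          rfl))))))))
    · rintro (h | h | h | h | h | h | h | h | h | h)
      · exact ⟨1, Or.inl rfl, 1, Or.inl rfl, by rw [h, one_mul]⟩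
      · exact ⟨1, Or.inl rfl, c, Or.inr (Or.inl rfl), by rw [h, one_mul]⟩
      · exact ⟨1, Or.inl rfl, c ^ 2, Or.inr (Or.inr (Or.inl rfl)), by rw [h, one_mul]⟩
      · exact ⟨c, Or.inr (Or.inl rfl), c ^ 2, Or.inr (Or.inr (Or.inl rfl)),
          by rw [h, ← pow_succ']⟩
      · exact ⟨c ^ 2, Or.inr (Or.inr (Or.inl rfl)), c ^ 2, Or.inr (Or.inr (Or.inl rfl)),
          by rw [h, ← pow_add]⟩
      · exact ⟨1, Or.inl rfl, y, Or.inr (Or.inr (Or.inr rfl)), by rw [h, one_mul]⟩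
      · exact ⟨y, Or.inr (Or.inr (Or.inr rfl)), c, Or.inr (Or.inl rfl), by rw [h]⟩
      · exact ⟨y, Or.inr (Or.inr (Or.inr rfl)), c ^ 2, Or.inr (Or.inr (Or.inl rfl)),
          by rw [h]⟩
      · exact ⟨c ^ 2, Or.inr (Or.inr (Or.inl rfl)), y, Or.inr (Or.inr (Or.inr rfl)),
          by rw [h, hc2y]⟩
      · exact ⟨y, Or.inr (Or.inr (Or.inr rfl)), y, Or.inr (Or.inr (Or.inr rfl)), by rw [h]⟩
  -- inequalities
  have n01 : (1 : G) ≠ c := by simpa using hP 0 1 (by norm_num)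
  have n02 : (1 : G) ≠ c ^ 2 := by simpa using hP 0 2 (by norm_num)
  have n03 : (1 : G) ≠ c ^ 3 := by simpa using hP 0 3 (by norm_num)
  have n04 : (1 : G) ≠ c ^ 4 := by simpa using hP 0 4 (by norm_num)
  have n12 : c ≠ c ^ 2 := by simpa using hP 1 2 (by norm_num)
  have n13 : c ≠ c ^ 3 := by simpa using hP 1 3 (by norm_num)
  have n14 : c ≠ c ^ 4 := by simpa using hP 1 4 (by norm_num)
  have n23 : c ^ 2 ≠ c ^ 3 := hP 2 3 (by norm_num)
  have n24 : c ^ 2 ≠ c ^ 4 := hP 2 4 (by norm_num)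
  have n34 : c ^ 3 ≠ c ^ 4 := hP 3 4 (by norm_num)
  have nYm : ∀ m : ℕ, c ^ m ≠ y := fun m h => hy' m h.symm
  have n0y : (1 : G) ≠ y := by simpa using nYm 0
  have n1y : c ≠ y := by simpa using nYm 1
  have n2y : c ^ 2 ≠ y := nYm 2
  have n3y : c ^ 3 ≠ y := nYm 3
  have n4y : c ^ 4 ≠ y := nYm 4
  have nA' : ∀ m n : ℕ, c ^ m ≠ y * c ^ n := fun m n h => hA n m h.symm
  have n0yc : (1 : G) ≠ y * c := by simpa using nA' 0 1
  have n0yc2 : (1 : G) ≠ y * c ^ 2 := by simpa using nA' 0 2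
  have n0yc4 : (1 : G) ≠ y * c ^ 4 := by simpa using nA' 0 4
  have n1yc : c ≠ y * c := by simpa using nA' 1 1
  have n1yc2 : c ≠ y * c ^ 2 := by simpa using nA' 1 2
  have n1yc4 : c ≠ y * c ^ 4 := by simpa using nA' 1 4
  have n2yc : c ^ 2 ≠ y * c := by simpa using nA' 2 1
  have n2yc2 : c ^ 2 ≠ y * c ^ 2 := nA' 2 2
  have n2yc4 : c ^ 2 ≠ y * c ^ 4 := nA' 2 4
  have n3yc : c ^ 3 ≠ y * c := by simpa using nA' 3 1
  have n3yc2 : c ^ 3 ≠ y * c ^ 2 := nA' 3 2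
  have n3yc4 : c ^ 3 ≠ y * c ^ 4 := nA' 3 4
  have n4yc : c ^ 4 ≠ y * c := by simpa using nA' 4 1
  have n4yc2 : c ^ 4 ≠ y * c ^ 2 := nA' 4 2
  have n4yc4 : c ^ 4 ≠ y * c ^ 4 := nA' 4 4
  have nYY : ∀ m : ℕ, c ^ m ≠ y * y := fun m h => hyy m h.symm
  have n0yy : (1 : G) ≠ y * y := by simpa using nYY 0
  have n1yy : c ≠ y * y := by simpa using nYY 1
  have n2yy : c ^ 2 ≠ y * y := nYY 2
  have n3yy : c ^ 3 ≠ y * y := nYY 3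
  have n4yy : c ^ 4 ≠ y * y := nYY 4
  have nyyc : y ≠ y * c := by simpa using hB 0 1 (by norm_num)
  have nyyc2 : y ≠ y * c ^ 2 := by simpa using hB 0 2 (by norm_num)
  have nyyc4 : y ≠ y * c ^ 4 := by simpa using hB 0 4 (by norm_num)
  have nyyy : y ≠ y * y := by
    intro h
    exact hy' 0 (by rw [pow_zero]; exact (mul_left_cancel (a := y) (by rw [mul_one]; exact h)).symm)
  have nycyc2 : y * c ≠ y * c ^ 2 := by simpa using hB 1 2 (by norm_num)
  have nycyc4 : y * c ≠ y * c ^ 4 := by simpa using hB 1 4 (by norm_num)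
  have nycyy : y * c ≠ y * y := fun h => hy' 1 (by rw [pow_one]; exact (mul_left_cancel h).symm)
  have nyc2yc4 : y * c ^ 2 ≠ y * c ^ 4 := hB 2 4 (by norm_num)
  have nyc2yy : y * c ^ 2 ≠ y * y := fun h => hy' 2 (mul_left_cancel h).symm
  have nyc4yy : y * c ^ 4 ≠ y * y := fun h => hy' 4 (mul_left_cancel h).symm
  have hcard : (S * S).card = 10 := by
    rw [hS]
    rw [card_insert_of_notMem (by
      simp [n01, n02, n03, n04, n0y, n0yc, n0yc2, n0yc4, n0yy])]
    rw [card_insert_of_notMem (by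
      simp [n12, n13, n14, n1y, n1yc, n1yc2, n1yc4, n1yy])]
    rw [card_insert_of_notMem (by
      simp [n23, n24, n2y, n2yc, n2yc2, n2yc4, n2yy])]
    rw [card_insert_of_notMem (by
      simp [n34, n3y, n3yc, n3yc2, n3yc4, n3yy])]
    rw [card_insert_of_notMem (by
      simp [n4y, n4yc, n4yc2, n4yc4, n4yy])]
    rw [card_insert_of_notMem (by
      simp [nyyc, nyyc2, nyyc4, nyyy])]
    rw [card_insert_of_notMem (by
      simp [nycyc2, nycyc4, nycyy])]
    rw [card_insert_of_notMem (by simp [nyc2yc4, nyc2yy])]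
    rw [card_insert_of_notMem (by simp [nyc4yy])]
    rw [card_singleton]
  have hcardS : S.card = 4 := by
    show ({1, c, c ^ 2, y} : Finset G).card = 4
    rw [card_insert_of_notMem (by simp [n01, n02, n0y])]
    rw [card_insert_of_notMem (by simp [n12, n1y])]
    rw [card_insert_of_notMem (by simp [n2y])]
    rw [card_singleton]
  exact ⟨hcard, by rw [hcard, hcardS]⟩
end
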